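/- arXiv:1011.0014 — 2 statements merged into one kernel-verified Lean document; each statement's English description precedes it below -/
import Mathlib

section
/- Let Q : P → F and let R be an equivalence relation on P refining ker Q (so R p p' implies Q p = Q p'). Then the equivalence relation ~_{H_R} induced by the subgroup H_R = {φ ∈ Equiv.Perm P | ∀ p, R p (φ p)} equals R; that is, for all p p': (∃ φ ∈ H_R, φ p = p') ↔ R p p'. (The forward direction is immediate; the backward direction is witnessed by the transposition swapping p and p', which preserves R and Q.) -/
/-- The subgroup `Aut(P/F)` of permutations of programs preserving functionality. -/
def autSub {P F : Type*} (Q : P → F) : Subgroup (Equiv.Perm P) where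
  carrier := {φ | ∀ p, Q (φ p) = Q p}
  one_mem' := fun _ => rfl
  mul_mem' := by
    intro a b ha hb p
    have : (a * b) p = a (b p) := rfl
    rw [this, ha (b p), hb p]
  inv_mem' := by
    intro a ha p
    have h := ha (a⁻¹ p)
    rw [show a (a⁻¹ p) = p from a.apply_symm_apply p] at h
    exact h.symm

/-- The relation `~_H` induced by a subgroup of permutations. -/
def grpRel {P : Type*} (H : Subgroup (Equiv.Perm P)) : P → P → Prop :=
  fun p p' => ∃ φ ∈ H, φ p = p'

theorem grpRel_equivalence {P : Type*} (H : Subgroup (Equiv.Perm P)) :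
    Equivalence (grpRel H) := by
  constructor
  · exact fun p => ⟨1, H.one_mem, rfl⟩
  · rintro p q ⟨φ, hφ, rfl⟩
    exact ⟨φ⁻¹, H.inv_mem hφ, φ.symm_apply_apply p⟩
  · rintro p q r ⟨φ, hφ, rfl⟩ ⟨ψ, hψ, rfl⟩
    exact ⟨ψ * φ, H.mul_mem hψ hφ, rfl⟩

/-- The setoid on programs induced by a subgroup of permutations. -/
def setoidOf {P : Type*} (H : Subgroup (Equiv.Perm P)) : Setoid P :=
  ⟨grpRel H, grpRel_equivalence H⟩

/-- The subgroup `H_R` of permutations preserving an equivalence relation `R`. -/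
def HR {P : Type*} (R : P → P → Prop) (hR : Equivalence R) : Subgroup (Equiv.Perm P) where
  carrier := {φ | ∀ p, R p (φ p)}
  one_mem' := fun p => hR.refl p
  mul_mem' := by
    intro a b ha hb p
    have : (a * b) p = a (b p) := rfl
    rw [this]
    exact hR.trans (hb p) (ha (b p))
  inv_mem' := by
    intro a ha p
    have h := ha (a⁻¹ p)
    rw [show a (a⁻¹ p) = p from a.apply_symm_apply p] at h
    exact hR.symm h


theorem rel_of_HR_eq {P F : Type*} [DecidableEq P] (Q : P → F)
    (R : P → P → Prop) (hR : Equivalence R)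
    (href : ∀ p p' : P, R p p' → Q p = Q p') :
    ∀ p p' : P, (∃ φ ∈ HR R hR, φ p = p') ↔ R p p' := by
  intro p p'
  constructor
  · rintro ⟨φ, hφ, rfl⟩
    exact hφ p
  · intro h
    refine ⟨Equiv.swap p p', fun q => ?_, Equiv.swap_apply_left p p'⟩
    rcases eq_or_ne q p with rfl | hqp
    · rwa [Equiv.swap_apply_left]
    rcases eq_or_ne q p' with rfl | hqp'
    · rw [Equiv.swap_apply_right]
      exact hR.symm h
    · rw [Equiv.swap_apply_of_ne_of_ne hqp hqp']
      exact hR.refl q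
end

section
/- Let Q : P → F. The map R ↦ H_R = {φ ∈ Equiv.Perm P | ∀ p, R p (φ p)}, from equivalence relations on P refining ker Q (ordered by refinement) to subgroups of Aut(P/F), is injective and order-reflecting: H_R ≤ H_{R'} implies R refines R'. -/
theorem HR_injective_order_reflecting {P F : Type*} [DecidableEq P] (Q : P → F)
    (R R' : P → P → Prop) (hR : Equivalence R) (hR' : Equivalence R')
    (href : ∀ p p' : P, R p p' → Q p = Q p')
    (href' : ∀ p p' : P, R' p p' → Q p = Q p') :
    (HR R hR = HR R' hR' → R = R') ∧
    (HR R hR ≤ HR R' hR' → ∀ p p' : P, R p p' → R' p p') := by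
  have key : ∀ (S : P → P → Prop) (hS : Equivalence S),
      HR R hR ≤ HR S hS → ∀ p p' : P, R p p' → S p p' := by
    intro S hS hle p p' hpp'
    have hswap : Equiv.swap p p' ∈ HR R hR := by
      intro q
      rcases eq_or_ne q p with rfl | hqp
      · rw [Equiv.swap_apply_left]; exact hpp'
      rcases eq_or_ne q p' with rfl | hqp'
      · rw [Equiv.swap_apply_right]; exact hR.symm hpp'
      · rw [Equiv.swap_apply_of_ne_of_ne hqp hqp']; exact hR.refl q
    have := hle hswap p
    rwa [Equiv.swap_apply_left] at this
  constructor
  · intro heq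
    funext p p'
    apply propext
    constructor
    · exact key R' hR' heq.le p p'
    · intro h
      -- symmetric: HR R' ≤ HR R gives R' → R; redo key with roles swapped
      have hswap : Equiv.swap p p' ∈ HR R' hR' := by
        intro q
        rcases eq_or_ne q p with rfl | hqp
        · rw [Equiv.swap_apply_left]; exact h
        rcases eq_or_ne q p' with rfl | hqp'
        · rw [Equiv.swap_apply_right]; exact hR'.symm h
        · rw [Equiv.swap_apply_of_ne_of_ne hqp hqp']; exact hR'.refl q
      have := heq.ge hswap p
      rwa [Equiv.swap_apply_left] at this
  · exact key R' hR'
end
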